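/- Let p > 2 be a real number. Then f(u) tends to 0 as u tends to 0 from within the open interval (0,1). -/

import Mathlib

/-- The function f from Lemma 1 of the paper. -/
noncomputable def f (p u : ℝ) : ℝ :=
  (1 - u ^ (2:ℝ)) ^ p / (1 + u ^ p) *
    ((1 + u ^ (p - 1)) ^ (p / (p - 1)) - (1 - u ^ (p - 1)) ^ (p / (p - 1))) /
    ((1 + u) ^ p * (1 - u ^ (p - 1)) ^ (p / (p - 1)) -
      (1 - u) ^ p * (1 + u ^ (p - 1)) ^ (p / (p - 1)))

/-!
Write `q = p / (p - 1)` and `t = u ^ (p - 1)`. The numerator factor `(1 + t) ^ q - (1 - t) ^ q`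
vanishes at `t = 0` with derivative `2 q`, and the denominator vanishes at `u = 0` with derivative
`2 p` (the terms in `u ^ (p - 1)` contribute nothing since `p - 1 > 1`). Hence
`f p u ≈ (2 q u ^ (p - 1)) / (2 p u) = (q / p) u ^ (p - 2) → 0`, because `p > 2`.
-/

open Filter Topology Set Real

lemma tendsto_div_self_nhdsNE_of_hasDerivAt {g : ℝ → ℝ} {c : ℝ} (hg : HasDerivAt g c 0)
    (h0 : g 0 = 0) : Tendsto (fun x => g x / x) (𝓝[≠] 0) (𝓝 c) := by
  refine hg.tendsto_slope_zero.congr fun x => ?_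
  simp [h0, div_eq_inv_mul]

lemma tendsto_rpow_nhdsGT_zero {r : ℝ} (hr : 0 < r) :
    Tendsto (fun u : ℝ => u ^ r) (𝓝[>] 0) (𝓝[>] 0) := by
  refine tendsto_nhdsWithin_iff.mpr
    ⟨?_, eventually_nhdsWithin_of_forall fun u hu => rpow_pos_of_pos hu r⟩
  simpa [zero_rpow hr.ne'] using
    ((continuousAt_rpow_const 0 r (Or.inr hr.le)).tendsto).mono_left nhdsWithin_le_nhds

lemma hasDerivAt_rpow_const_zero {r : ℝ} (hr : 1 < r) :
    HasDerivAt (fun u : ℝ => u ^ r) 0 0 := by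
  simpa [zero_rpow (by linarith : r - 1 ≠ 0)] using hasDerivAt_rpow_const (x := 0) (Or.inr hr.le)

lemma hasDerivAt_one_add_rpow_sub_one_sub_rpow (q : ℝ) :
    HasDerivAt (fun t : ℝ => (1 + t) ^ q - (1 - t) ^ q) (2 * q) 0 := by
  have h := (((hasDerivAt_id (0:ℝ)).const_add 1).rpow_const (p := q) (Or.inl (by norm_num))).sub
    (((hasDerivAt_id (0:ℝ)).const_sub 1).rpow_const (p := q) (Or.inl (by norm_num)))
  norm_num at h
  exact h.congr_deriv (by ring)

lemma hasDerivAt_one_add_rpow_mul_sub_one_sub_rpow_mul (p q : ℝ) {r : ℝ} (hr : 1 < r) :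
    HasDerivAt (fun u : ℝ => (1 + u) ^ p * (1 - u ^ r) ^ q - (1 - u) ^ p * (1 + u ^ r) ^ q)
      (2 * p) 0 := by
  have hr0 : r ≠ 0 := by linarith
  have hpow := hasDerivAt_rpow_const_zero hr
  have h := ((((hasDerivAt_id (0:ℝ)).const_add 1).rpow_const (p := p) (Or.inl (by norm_num))).mul
      ((hpow.const_sub 1).rpow_const (p := q) (Or.inl (by simp [zero_rpow hr0])))).sub
    ((((hasDerivAt_id (0:ℝ)).const_sub 1).rpow_const (p := p) (Or.inl (by norm_num))).mul
      ((hpow.const_add 1).rpow_const (p := q) (Or.inl (by simp [zero_rpow hr0]))))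
  norm_num [zero_rpow hr0] at h
  exact h.congr_deriv (by ring)

lemma f_eq_mul_slopes {p u : ℝ} (hu : 0 < u) :
    f p u = (1 - u ^ (2:ℝ)) ^ p / (1 + u ^ p) *
      (((1 + u ^ (p - 1)) ^ (p / (p - 1)) - (1 - u ^ (p - 1)) ^ (p / (p - 1))) / u ^ (p - 1)) *
      u ^ (p - 2) /
      (((1 + u) ^ p * (1 - u ^ (p - 1)) ^ (p / (p - 1)) -
        (1 - u) ^ p * (1 + u ^ (p - 1)) ^ (p / (p - 1))) / u) := by
  have hsplit : u ^ (p - 1) = u ^ (p - 2) * u := by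
    rw [show p - 1 = (p - 2) + 1 by ring, rpow_add hu, rpow_one]
  have hs : u ^ (p - 2) ≠ 0 := (rpow_pos_of_pos hu _).ne'
  rw [f, hsplit]
  field_simp

theorem stmt_9 (p : ℝ) (hp : 2 < p) :
    Filter.Tendsto (f p) (nhdsWithin 0 (Set.Ioo 0 1)) (nhds 0) := by
  refine Tendsto.mono_left ?_ (nhdsWithin_mono _ Ioo_subset_Ioi_self)
  have hp0 : 0 < p := by linarith
  have hpow {r : ℝ} (hr : 0 < r) : Tendsto (fun u : ℝ => u ^ r) (𝓝[>] 0) (𝓝 0) :=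
    tendsto_nhds_of_tendsto_nhdsWithin (tendsto_rpow_nhdsGT_zero hr)
  have hprefactor :
      Tendsto (fun u : ℝ => (1 - u ^ (2:ℝ)) ^ p / (1 + u ^ p)) (𝓝[>] 0) (𝓝 1) := by
    have h := (((tendsto_const_nhds (x := (1:ℝ))).sub (hpow two_pos)).rpow_const (p := p)
      (Or.inl (by simp))).div ((tendsto_const_nhds (x := (1:ℝ))).add (hpow hp0))
      (by simp)
    rwa [sub_zero, one_rpow, add_zero, div_one] at h
  have hnum := (tendsto_div_self_nhdsNE_of_hasDerivAt
    (hasDerivAt_one_add_rpow_sub_one_sub_rpow (p / (p - 1))) (by simp)).comp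
    ((tendsto_rpow_nhdsGT_zero (by linarith : (0:ℝ) < p - 1)).mono_right (nhdsGT_le_nhdsNE 0))
  have hden := (tendsto_div_self_nhdsNE_of_hasDerivAt
    (hasDerivAt_one_add_rpow_mul_sub_one_sub_rpow_mul p (p / (p - 1))
      (by linarith : (1:ℝ) < p - 1))
    (by simp [zero_rpow (by linarith : p - 1 ≠ 0)])).mono_left (nhdsGT_le_nhdsNE 0)
  have h := ((hprefactor.mul hnum).mul (hpow (by linarith : (0:ℝ) < p - 2))).div hden
    (by positivity)
  rw [mul_zero, zero_div] at h
  exact h.congr' (eventually_nhdsWithin_of_forall fun u hu => (f_eq_mul_slopes hu).symm)
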